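/- For a minimax saddle point of positive IRU-sets: if 𝒜, ℬ are compact IRU-sets of strictly positive matrices, Ã ∈ 𝒜 minimizes ρ(A·B̃) over 𝒜, B̃ maximizes min_{A} ρ(A·B) over ℬ, and v > 0 is the Perron eigenvector of Ã·B̃ with eigenvalue ρ̃ = ρ(Ã·B̃), then setting w = B̃·v one has ρ̃·v ≤ A·w for all A ∈ 𝒜 and B·v ≤ w for all B ∈ ℬ. -/

import Mathlib

open Matrix

/-- Spectral radius of a real square matrix: the maximum modulus of its complex eigenvalues. -/
noncomputable def specRad {N : ℕ} (A : Matrix (Fin N) (Fin N) ℝ) : ℝ :=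
  sSup ((fun z : ℂ => ‖z‖) '' spectrum ℂ (A.map (Complex.ofReal)))

/-- The IRU-set (independent row uncertainty set) determined by row sets `rows i ⊆ ℝ^M`:
all `N × M` matrices whose `i`-th row belongs to `rows i`. -/
def IRU {N M : ℕ} (rows : Fin N → Set (Fin M → ℝ)) : Set (Matrix (Fin N) (Fin M) ℝ) :=
  {A | ∀ i, A i ∈ rows i}

/-!
Both inequalities are proved by contradiction, changing a single row, which keeps a matrix in
its IRU-set. Spectral radii of nonnegative matrices are compared through positive test vectors
(Collatz–Wielandt): `C v ≤ r v` forces `ρ(C) ≤ r` (look at an eigenvector entry of maximal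
`|xₖ| / vₖ`), and `r v ≤ C v` forces `r ≤ ρ(C)` (then `‖Cᵐ‖ ≥ rᵐ`; apply Gelfand's formula).

If `(A w)ᵢ < ρ̃ vᵢ`, replacing row `i` of `Ã` by that of `A` gives a positive `C = A' B̃` with
`C v ≤ ρ̃ v`, strictly in row `i`; then `C (C v) < ρ̃ (C v)` in every row, so `ρ(C) < ρ̃`,
against the minimality of `Ã`. If `(B v)ᵢ > wᵢ`, replacing row `i` of `B̃` by that of `B` adds
`δ > 0` to `wᵢ`, so `A B' v ≥ ρ̃ v + δ A·ᵢ ≥ (ρ̃ + c δ / ‖v‖) v` for every `A ∈ 𝒜`, where `c > 0`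
bounds the entries of `𝒜` from below by compactness. Hence `min_A ρ(A B') > ρ̃ ≥ min_A ρ(A B̃)`,
against the maximality of `B̃`.
-/

attribute [local instance] Matrix.linftyOpNormedRing Matrix.linftyOpNormedAlgebra

namespace Matrix

lemma mul_apply_pos {l m n : Type*} [Fintype m] [Nonempty m] {A : Matrix l m ℝ}
    {B : Matrix m n ℝ} (hA : ∀ i j, 0 < A i j) (hB : ∀ i j, 0 < B i j) (i : l) (k : n) :
    0 < (A * B) i k :=
  Finset.sum_pos (fun j _ => mul_pos (hA i j) (hB j k)) Finset.univ_nonempty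

lemma nonempty_of_mulVec_apply_lt {m n : Type*} [Fintype n] {A B : Matrix m n ℝ}
    {x y : n → ℝ} {i : m} (h : (A *ᵥ x) i < (B *ᵥ y) i) : Nonempty n := by
  by_contra hn
  simp [not_nonempty_iff.1 hn, mulVec, dotProduct] at h

section Nonneg

variable {n : Type*} [Fintype n] {C : Matrix n n ℝ}

lemma mulVec_le_mulVec_of_nonneg (hC : ∀ i j, 0 ≤ C i j) {x y : n → ℝ} (hxy : ∀ i, x i ≤ y i)
    (i : n) : (C *ᵥ x) i ≤ (C *ᵥ y) i :=
  Finset.sum_le_sum fun j _ => mul_le_mul_of_nonneg_left (hxy j) (hC i j)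

lemma pow_smul_le_pow_mulVec [DecidableEq n] (hC : ∀ i j, 0 ≤ C i j) {v : n → ℝ} {r : ℝ}
    (hr : 0 ≤ r) (h : ∀ i, r * v i ≤ (C *ᵥ v) i) (m : ℕ) (i : n) :
    r ^ m * v i ≤ (C ^ m *ᵥ v) i := by
  induction m generalizing i with
  | zero => simp
  | succ m ih =>
    calc r ^ (m + 1) * v i = r ^ m * (r * v i) := by ring
      _ ≤ r ^ m * (C *ᵥ v) i := mul_le_mul_of_nonneg_left (h i) (pow_nonneg hr m)
      _ = (C *ᵥ (r ^ m • v)) i := by simp [mulVec_smul]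
      _ ≤ (C *ᵥ (C ^ m *ᵥ v)) i := mulVec_le_mulVec_of_nonneg hC (by simpa using ih) i
      _ = (C ^ (m + 1) *ᵥ v) i := by rw [mulVec_mulVec, pow_succ']

lemma pow_le_norm_pow_of_le_mulVec [DecidableEq n] [Nonempty n] {v : n → ℝ} {r : ℝ}
    (hC : ∀ i j, 0 ≤ C i j) (hv : ∀ i, 0 < v i) (hr : 0 ≤ r) (h : ∀ i, r * v i ≤ (C *ᵥ v) i) (m : ℕ) : r ^ m ≤ ‖C ^ m‖ := by
  have hvnorm : 0 < ‖v‖ := by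
    obtain ⟨i⟩ := ‹Nonempty n›
    exact (hv i).trans_le ((Real.le_norm_self _).trans (norm_le_pi_norm v i))
  have hsmul : ‖r ^ m • v‖ ≤ ‖C ^ m *ᵥ v‖ := by
    refine (pi_norm_le_iff_of_nonneg (norm_nonneg _)).2 fun i => ?_
    have hi := pow_smul_le_pow_mulVec hC hr h m i
    calc ‖(r ^ m • v) i‖ = r ^ m * v i := by
          simp [abs_of_nonneg hr, abs_of_pos (hv i)]
      _ ≤ ‖(C ^ m *ᵥ v) i‖ := hi.trans (Real.le_norm_self _)
      _ ≤ ‖C ^ m *ᵥ v‖ := norm_le_pi_norm _ i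
  have := hsmul.trans (linfty_opNorm_mulVec (C ^ m) v)
  rw [norm_smul, Real.norm_of_nonneg (pow_nonneg hr m)] at this
  exact le_of_mul_le_mul_right this hvnorm

lemma norm_le_of_mulVec_eq_smul {v : n → ℝ} {r : ℝ}
    (hC : ∀ i j, 0 ≤ C i j) (hv : ∀ i, 0 < v i) (h : ∀ i, (C *ᵥ v) i ≤ r * v i)
    {x : n → ℂ} (hx : x ≠ 0) {z : ℂ} (hxz : C.map Complex.ofReal *ᵥ x = z • x) : ‖z‖ ≤ r := by
  set y : n → ℝ := fun k => ‖x k‖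
  have hzy : ∀ k, ‖z‖ * y k ≤ (C *ᵥ y) k := fun k => by
    calc ‖z‖ * y k = ‖∑ l, (C k l : ℂ) * x l‖ := by
          rw [← norm_mul, ← smul_eq_mul, ← Pi.smul_apply z x, ← hxz]; rfl
      _ ≤ ∑ l, ‖(C k l : ℂ) * x l‖ := norm_sum_le _ _
      _ = (C *ᵥ y) k := Finset.sum_congr rfl fun l _ => by
          rw [norm_mul, Complex.norm_real, Real.norm_of_nonneg (hC k l)]
  obtain ⟨k₀, hk₀⟩ : ∃ k, x k ≠ 0 := Function.ne_iff.1 hx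
  obtain ⟨j, -, hj⟩ := Finset.exists_max_image Finset.univ (fun k => y k / v k) ⟨k₀, by simp⟩
  set t := y j / v j
  have hyt : ∀ k, y k ≤ t * v k := fun k => (div_le_iff₀ (hv k)).1 (hj k (Finset.mem_univ k))
  have ht : 0 < t := (div_pos (norm_pos_iff.2 hk₀) (hv k₀)).trans_le (hj k₀ (Finset.mem_univ _))
  have hyj : y j = t * v j := (div_mul_cancel₀ _ (hv j).ne').symm
  have key : ‖z‖ * (t * v j) ≤ r * (t * v j) :=
    calc ‖z‖ * (t * v j) ≤ (C *ᵥ y) j := hyj ▸ hzy j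
      _ ≤ (C *ᵥ (t • v)) j := mulVec_le_mulVec_of_nonneg hC (by simpa using hyt) j
      _ = t * (C *ᵥ v) j := by simp [mulVec_smul]
      _ ≤ t * (r * v j) := mul_le_mul_of_nonneg_left (h j) ht.le
      _ = r * (t * v j) := by ring
  exact le_of_mul_le_mul_right key (mul_pos ht (hv j))

end Nonneg

lemma linfty_opNorm_map_ofReal {n : Type*} [Fintype n] [DecidableEq n] (C : Matrix n n ℝ) :
    ‖C.map Complex.ofReal‖ = ‖C‖ := by
  simp [linfty_opNorm_def]

end Matrix

lemma ofReal_le_spectralRadius_of_pow_le_norm_pow {A : Type*} [NormedRing A] [NormedAlgebra ℂ A]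
    [CompleteSpace A] {a : A} {r : ℝ} (hr : 0 ≤ r) (h : ∀ m : ℕ, r ^ m ≤ ‖a ^ m‖) :
    ENNReal.ofReal r ≤ spectralRadius ℂ a := by
  refine ge_of_tendsto (spectrum.pow_norm_pow_one_div_tendsto_nhds_spectralRadius a) ?_
  filter_upwards [Filter.eventually_ge_atTop 1] with m hm
  refine ENNReal.ofReal_le_ofReal ?_
  calc r = (r ^ m) ^ (1 / m : ℝ) := by
        rw [← Real.rpow_natCast, ← Real.rpow_mul hr, mul_one_div_cancel (by positivity),
          Real.rpow_one]
    _ ≤ ‖a ^ m‖ ^ (1 / m : ℝ) := by gcongr; exact h m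

lemma specRad_nonneg {N : ℕ} (C : Matrix (Fin N) (Fin N) ℝ) : 0 ≤ specRad C :=
  Real.sSup_nonneg <| by rintro _ ⟨z, _, rfl⟩; exact norm_nonneg z

lemma spectralRadius_map_ofReal_le {N : ℕ} [Nonempty (Fin N)] (C : Matrix (Fin N) (Fin N) ℝ) :
    spectralRadius ℂ (C.map Complex.ofReal) ≤ ENNReal.ofReal (specRad C) := by
  have hbdd : BddAbove ((fun z : ℂ => ‖z‖) '' spectrum ℂ (C.map Complex.ofReal)) :=
    ⟨‖C.map Complex.ofReal‖, by rintro _ ⟨z, hz, rfl⟩; exact spectrum.norm_le_norm_of_mem hz⟩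
  refine iSup₂_le fun z hz => ?_
  rw [← ENNReal.ofReal_coe_nnreal, coe_nnnorm]
  exact ENNReal.ofReal_le_ofReal (le_csSup hbdd ⟨z, hz, rfl⟩)

lemma le_specRad_of_le_mulVec {N : ℕ} [Nonempty (Fin N)] {C : Matrix (Fin N) (Fin N) ℝ}
    {v : Fin N → ℝ} {r : ℝ} (hC : ∀ i j, 0 ≤ C i j) (hv : ∀ i, 0 < v i) (hr : 0 ≤ r)
    (h : ∀ i, r * v i ≤ (C *ᵥ v) i) : r ≤ specRad C := by
  have hpow : ∀ m : ℕ, r ^ m ≤ ‖(C.map Complex.ofReal) ^ m‖ := fun m => by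
    have hmap : (C.map Complex.ofReal) ^ m = (C ^ m).map Complex.ofReal :=
      (C.map_pow Complex.ofRealHom m).symm
    rw [hmap, linfty_opNorm_map_ofReal]
    exact pow_le_norm_pow_of_le_mulVec hC hv hr h m
  have := (ofReal_le_spectralRadius_of_pow_le_norm_pow hr hpow).trans
    (spectralRadius_map_ofReal_le C)
  exact (ENNReal.ofReal_le_ofReal_iff (specRad_nonneg C)).1 this

lemma specRad_le_of_mulVec_le {N : ℕ} {C : Matrix (Fin N) (Fin N) ℝ} {v : Fin N → ℝ} {r : ℝ}
    (hC : ∀ i j, 0 ≤ C i j) (hv : ∀ i, 0 < v i) (hr : 0 ≤ r)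
    (h : ∀ i, (C *ᵥ v) i ≤ r * v i) : specRad C ≤ r := by
  refine Real.sSup_le ?_ hr
  rintro _ ⟨z, hz, rfl⟩
  rw [← AlgEquiv.spectrum_eq (Matrix.toLinAlgEquiv' : Matrix (Fin N) (Fin N) ℂ ≃ₐ[ℂ] _),
    ← Module.End.hasEigenvalue_iff_mem_spectrum] at hz
  obtain ⟨x, hx⟩ := hz.exists_hasEigenvector
  exact norm_le_of_mulVec_eq_smul hC hv h hx.2 (by simpa using hx.apply_eq_smul)

lemma specRad_lt_of_mulVec_lt {N : ℕ} [Nonempty (Fin N)] {C : Matrix (Fin N) (Fin N) ℝ}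
    {v : Fin N → ℝ} {r : ℝ} (hC : ∀ i j, 0 ≤ C i j) (hv : ∀ i, 0 < v i)
    (h : ∀ i, (C *ᵥ v) i < r * v i) : specRad C < r := by
  set s := Finset.univ.sup' Finset.univ_nonempty fun i => (C *ᵥ v) i / v i
  have hCv : ∀ i, 0 ≤ (C *ᵥ v) i := fun i => by
    simpa using mulVec_le_mulVec_of_nonneg hC (x := 0) (fun j => (hv j).le) i
  have hs : 0 ≤ s := by
    obtain ⟨i⟩ := ‹Nonempty (Fin N)›
    exact (div_nonneg (hCv i) (hv i).le).trans
      (Finset.le_sup' (fun i => (C *ᵥ v) i / v i) (Finset.mem_univ i))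
  have hsr : s < r := (Finset.sup'_lt_iff _).2 fun i _ => (div_lt_iff₀ (hv i)).2 (h i)
  refine lt_of_le_of_lt (specRad_le_of_mulVec_le hC hv hs fun i => ?_) hsr
  exact (div_le_iff₀ (hv i)).1 (Finset.le_sup' (fun i => (C *ᵥ v) i / v i) (Finset.mem_univ i))

lemma specRad_lt_of_mulVec_le_of_lt {N : ℕ} {C : Matrix (Fin N) (Fin N) ℝ} {v : Fin N → ℝ}
    {r : ℝ} {i : Fin N} (hC : ∀ j k, 0 ≤ C j k) (hCi : ∀ j, 0 < C j i) (hv : ∀ j, 0 < v j)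
    (hle : ∀ j, (C *ᵥ v) j ≤ r * v j) (hlt : (C *ᵥ v) i < r * v i) : specRad C < r := by
  have : Nonempty (Fin N) := ⟨i⟩
  -- The positive column `i` spreads the strict inequality of row `i` to every row of `C (C v)`.
  refine specRad_lt_of_mulVec_lt hC (v := C *ᵥ v) (fun j => ?_) fun j => ?_
  · exact (mul_pos (hCi j) (hv i)).trans_le <| Finset.single_le_sum
      (f := fun k => C j k * v k) (fun k _ => mul_nonneg (hC j k) (hv k).le) (Finset.mem_univ i)
  · calc (C *ᵥ (C *ᵥ v)) j < (C *ᵥ (r • v)) j :=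
          Finset.sum_lt_sum (fun k _ => mul_le_mul_of_nonneg_left (by simpa using hle k) (hC j k))
            ⟨i, Finset.mem_univ i, mul_lt_mul_of_pos_left (by simpa using hlt) (hCi j)⟩
      _ = r * (C *ᵥ v) j := by simp [mulVec_smul]

section IRU

variable {N M : ℕ} {rows : Fin N → Set (Fin M → ℝ)}

lemma updateRow_mem_IRU {A : Matrix (Fin N) (Fin M) ℝ} (hA : A ∈ IRU rows) {i : Fin N}
    {a : Fin M → ℝ} (ha : a ∈ rows i) : A.updateRow i a ∈ IRU rows := by
  intro j
  rcases eq_or_ne j i with rfl | hj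
  · simpa using ha
  · simpa [updateRow_ne hj] using hA j

lemma exists_pos_le_apply_of_mem_IRU (hcomp : ∀ i, IsCompact (rows i))
    (hpos : ∀ i, ∀ a ∈ rows i, ∀ k, 0 < a k) (k : Fin M) :
    ∃ c > 0, ∀ A ∈ IRU rows, ∀ i, c ≤ A i k := by
  obtain ⟨c, hc, hle⟩ := (isCompact_iUnion hcomp).exists_forall_le'
    (continuous_apply k).continuousOn (a := 0) (by simpa using fun a i ha => hpos i a ha k)
  exact ⟨c, hc, fun A hA i => hle _ (Set.mem_iUnion.2 ⟨i, hA i⟩)⟩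

end IRU

section SaddlePoint

variable {N M : ℕ} {rowsA : Fin N → Set (Fin M → ℝ)} {rowsB : Fin M → Set (Fin N → ℝ)}
  {Atil : Matrix (Fin N) (Fin M) ℝ} {Btil : Matrix (Fin M) (Fin N) ℝ} {v : Fin N → ℝ}

lemma smul_le_mulVec_of_forall_specRad_le (hApos : ∀ i, ∀ a ∈ rowsA i, ∀ j, 0 < a j)
    (hAtil : Atil ∈ IRU rowsA) (hBpos : ∀ i j, 0 < Btil i j)
    (hmin : ∀ A ∈ IRU rowsA, specRad (Atil * Btil) ≤ specRad (A * Btil)) (hv : ∀ i, 0 < v i)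
    (hev : (Atil * Btil) *ᵥ v = specRad (Atil * Btil) • v) :
    ∀ A ∈ IRU rowsA, ∀ i, specRad (Atil * Btil) * v i ≤ (A *ᵥ (Btil *ᵥ v)) i := by
  intro A hA i
  by_contra! hlt
  set ρ := specRad (Atil * Btil)
  have hw : Atil *ᵥ (Btil *ᵥ v) = ρ • v := by rw [mulVec_mulVec, hev]
  have hrow : (A *ᵥ (Btil *ᵥ v)) i < (Atil *ᵥ (Btil *ᵥ v)) i := by rw [hw]; exact hlt
  have := nonempty_of_mulVec_apply_lt hrow
  set A' := Atil.updateRow i (A i)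
  have hA' : A' ∈ IRU rowsA := updateRow_mem_IRU hAtil (hA i)
  have hC : ∀ j k, 0 < (A' * Btil) j k := mul_apply_pos (fun j k => hApos j _ (hA' j) k) hBpos
  have hCv : (A' * Btil) *ᵥ v = Function.update (ρ • v) i ((A *ᵥ (Btil *ᵥ v)) i) := by
    rw [← mulVec_mulVec, updateRow_mulVec, hw]; rfl
  refine (hmin A' hA').not_gt (specRad_lt_of_mulVec_le_of_lt (i := i) (fun j k => (hC j k).le)
    (fun j => hC j i) hv (fun j => ?_) (by simpa [hCv] using hlt))
  rcases eq_or_ne j i with rfl | hj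
  · simpa [hCv] using hlt.le
  · simp [hCv, hj]

lemma mulVec_le_of_forall_sInf_le (hAcomp : ∀ i, IsCompact (rowsA i))
    (hApos : ∀ i, ∀ a ∈ rowsA i, ∀ j, 0 < a j) (hAtil : Atil ∈ IRU rowsA)
    (hBpos : ∀ i, ∀ b ∈ rowsB i, ∀ j, 0 < b j) (hBtil : Btil ∈ IRU rowsB)
    (hmax : ∀ B ∈ IRU rowsB,
      sInf ((fun A => specRad (A * B)) '' IRU rowsA) ≤
        sInf ((fun A => specRad (A * Btil)) '' IRU rowsA))
    (hv : ∀ i, 0 < v i)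
    (hA : ∀ A ∈ IRU rowsA, ∀ i, specRad (Atil * Btil) * v i ≤ (A *ᵥ (Btil *ᵥ v)) i) :
    ∀ B ∈ IRU rowsB, ∀ i, (B *ᵥ v) i ≤ (Btil *ᵥ v) i := by
  intro B hB i
  by_contra! hlt
  set ρ := specRad (Atil * Btil)
  set w := Btil *ᵥ v
  have := nonempty_of_mulVec_apply_lt hlt
  have : Nonempty (Fin M) := ⟨i⟩
  set B' := Btil.updateRow i (B i)
  have hB' : B' ∈ IRU rowsB := updateRow_mem_IRU hBtil (hB i)
  set δ := (B *ᵥ v) i - w i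
  have hδ : 0 < δ := sub_pos.2 hlt
  have hB'v : B' *ᵥ v = w + Pi.single i δ := by
    rw [updateRow_mulVec]
    ext k
    rcases eq_or_ne k i with rfl | hk
    · simp [δ, w, mulVec]
    · simp [hk, w]
  obtain ⟨c, hc, hcA⟩ := exists_pos_le_apply_of_mem_IRU hAcomp hApos i
  have hvnorm : 0 < ‖v‖ := by
    obtain ⟨l⟩ := ‹Nonempty (Fin N)›
    exact (hv l).trans_le ((Real.le_norm_self _).trans (norm_le_pi_norm v l))
  set r := ρ + c * δ / ‖v‖
  have hρr : ρ < r := lt_add_of_pos_right ρ (by positivity)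
  have hr : ∀ A ∈ IRU rowsA, r ≤ specRad (A * B') := fun A hA' => by
    refine le_specRad_of_le_mulVec (fun j k => (mul_apply_pos (fun j k => hApos j _ (hA' j) k)
      (fun j k => hBpos j _ (hB' j) k) j k).le) hv ((specRad_nonneg _).trans hρr.le) fun j => ?_
    have hcδ : c * δ / ‖v‖ * v j ≤ A j i * δ :=
      calc c * δ / ‖v‖ * v j ≤ c * δ / ‖v‖ * ‖v‖ := by
            gcongr; exact (Real.le_norm_self _).trans (norm_le_pi_norm v j)
        _ = c * δ := div_mul_cancel₀ _ hvnorm.ne'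
        _ ≤ A j i * δ := by gcongr; exact hcA A hA' j
    calc r * v j = ρ * v j + c * δ / ‖v‖ * v j := by ring
      _ ≤ (A *ᵥ w) j + A j i * δ := add_le_add (hA A hA' j) hcδ
      _ = ((A * B') *ᵥ v) j := by simp [← mulVec_mulVec, hB'v, mulVec_add, mul_comm]
  have : r ≤ ρ :=
    calc r ≤ sInf ((fun A => specRad (A * B')) '' IRU rowsA) :=
          le_csInf ⟨_, Atil, hAtil, rfl⟩ (by rintro _ ⟨A, hA', rfl⟩; exact hr A hA')
      _ ≤ sInf ((fun A => specRad (A * Btil)) '' IRU rowsA) := hmax B' hB'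
      _ ≤ ρ := csInf_le ⟨0, by rintro _ ⟨A, -, rfl⟩; exact specRad_nonneg _⟩ ⟨Atil, hAtil, rfl⟩
  exact this.not_gt hρr

end SaddlePoint

theorem stmt11_general {N M : ℕ}
    (rowsA : Fin N → Set (Fin M → ℝ)) (rowsB : Fin M → Set (Fin N → ℝ))
    (hAcomp : ∀ i, IsCompact (rowsA i))
    (hApos : ∀ i, ∀ a ∈ rowsA i, ∀ j, 0 < a j)
    (hBpos : ∀ i, ∀ b ∈ rowsB i, ∀ j, 0 < b j)
    (Atil : Matrix (Fin N) (Fin M) ℝ) (hAtil : Atil ∈ IRU rowsA)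
    (Btil : Matrix (Fin M) (Fin N) ℝ) (hBtil : Btil ∈ IRU rowsB)
    (hmin : ∀ A ∈ IRU rowsA, specRad (Atil * Btil) ≤ specRad (A * Btil))
    (hmax : ∀ B ∈ IRU rowsB,
      sInf ((fun A => specRad (A * B)) '' IRU rowsA) ≤
        sInf ((fun A => specRad (A * Btil)) '' IRU rowsA))
    (v : Fin N → ℝ) (hvpos : ∀ i, 0 < v i)
    (hev : (Atil * Btil).mulVec v = specRad (Atil * Btil) • v) :
    (∀ A ∈ IRU rowsA, ∀ i, specRad (Atil * Btil) * v i ≤ A.mulVec (Btil.mulVec v) i) ∧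
      (∀ B ∈ IRU rowsB, ∀ i, B.mulVec v i ≤ Btil.mulVec v i) := by
  have hAw := smul_le_mulVec_of_forall_specRad_le hApos hAtil
    (fun i j => hBpos i _ (hBtil i) j) hmin hvpos hev
  exact ⟨hAw, mulVec_le_of_forall_sInf_le hAcomp hApos hAtil hBpos hBtil hmax hvpos hAw⟩

theorem stmt11 {N M : ℕ}
    (rowsA : Fin N → Set (Fin M → ℝ)) (rowsB : Fin M → Set (Fin N → ℝ))
    (hAne : ∀ i, (rowsA i).Nonempty) (hAcomp : ∀ i, IsCompact (rowsA i))
    (hApos : ∀ i, ∀ a ∈ rowsA i, ∀ j, 0 < a j)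
    (hBne : ∀ i, (rowsB i).Nonempty) (hBcomp : ∀ i, IsCompact (rowsB i))
    (hBpos : ∀ i, ∀ b ∈ rowsB i, ∀ j, 0 < b j)
    (Atil : Matrix (Fin N) (Fin M) ℝ) (hAtil : Atil ∈ IRU rowsA)
    (Btil : Matrix (Fin M) (Fin N) ℝ) (hBtil : Btil ∈ IRU rowsB)
    (hmin : ∀ A ∈ IRU rowsA, specRad (Atil * Btil) ≤ specRad (A * Btil))
    (hmax : ∀ B ∈ IRU rowsB,
      sInf ((fun A => specRad (A * B)) '' IRU rowsA) ≤
        sInf ((fun A => specRad (A * Btil)) '' IRU rowsA))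
    (v : Fin N → ℝ) (hvpos : ∀ i, 0 < v i)
    (hev : (Atil * Btil).mulVec v = specRad (Atil * Btil) • v) :
    (∀ A ∈ IRU rowsA, ∀ i, specRad (Atil * Btil) * v i ≤ A.mulVec (Btil.mulVec v) i) ∧
      (∀ B ∈ IRU rowsB, ∀ i, B.mulVec v i ≤ Btil.mulVec v i) :=
  stmt11_general rowsA rowsB hAcomp hApos hBpos Atil hAtil Btil hBtil hmin hmax v hvpos hev
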